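/- arXiv:2602.01562 — 2 statements merged into one kernel-verified Lean document; each statement's English description precedes it below -/
import Mathlib

section
/- For every integer n ≥ 3, the local antimagic chromatic number of the join F_{n,1} ∨ K_1 equals 3. -/
/-!
Local antimagic (total) labelings and chromatic numbers, firecracker graphs,
stars, double stars, joins, and edge-corona products.
-/

open scoped Classical

noncomputable section

namespace LocalAntimagic

variable {V : Type*} [Fintype V]

/-- The weight of a vertex `u` under an edge labeling `f`: the sum of the
labels of the edges incident with `u`. -/
def weight (G : SimpleGraph V) (f : Sym2 V → ℕ) (u : V) : ℕ :=
  ∑ e ∈ G.edgeFinset, if u ∈ e then f e else 0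

/-- `f` is a local antimagic labeling of `G`: it maps the edge set of `G`
bijectively onto `{1, …, |E(G)|}` and adjacent vertices get distinct weights. -/
def IsLocalAntimagic (G : SimpleGraph V) (f : Sym2 V → ℕ) : Prop :=
  Set.BijOn f G.edgeSet (Set.Icc 1 G.edgeFinset.card) ∧
    ∀ u v, G.Adj u v → weight G f u ≠ weight G f v

/-- The number of distinct colors (vertex weights) induced by `f`. -/
def colorCount (G : SimpleGraph V) (f : Sym2 V → ℕ) : ℕ :=
  (Finset.univ.image (weight G f)).card

/-- The local antimagic chromatic number `χ_la(G)`: the least number of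
distinct induced colors over all local antimagic labelings of `G`. -/
def chiLA (G : SimpleGraph V) : ℕ :=
  sInf {c | ∃ f, IsLocalAntimagic G f ∧ colorCount G f = c}

/-- The total weight of a vertex `u` under a total labeling `(gv, ge)`:
`gv u` plus the sum of the labels of the edges incident with `u`. -/
def totalWeight (G : SimpleGraph V) (gv : V → ℕ) (ge : Sym2 V → ℕ) (u : V) : ℕ :=
  gv u + weight G ge u

/-- `(gv, ge)` is a local antimagic total labeling of `G`: together the vertex
labels and edge labels form a bijection from `V(G) ∪ E(G)` onto
`{1, …, |V(G)| + |E(G)|}`, and adjacent vertices get distinct total weights. -/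
def IsLocalAntimagicTotal (G : SimpleGraph V) (gv : V → ℕ) (ge : Sym2 V → ℕ) : Prop :=
  Set.BijOn (Sum.elim gv ge)
    (Set.range Sum.inl ∪ Sum.inr '' G.edgeSet)
    (Set.Icc 1 (Fintype.card V + G.edgeFinset.card)) ∧
    ∀ u v, G.Adj u v → totalWeight G gv ge u ≠ totalWeight G gv ge v

/-- The number of distinct colors (total vertex weights) induced by `(gv, ge)`. -/
def totalColorCount (G : SimpleGraph V) (gv : V → ℕ) (ge : Sym2 V → ℕ) : ℕ :=
  (Finset.univ.image (totalWeight G gv ge)).card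

/-- The local antimagic total chromatic number `χ_lat(G)`. -/
def chiLAT (G : SimpleGraph V) : ℕ :=
  sInf {c | ∃ gv ge, IsLocalAntimagicTotal G gv ge ∧ totalColorCount G gv ge = c}

/-- The firecracker graph `F_{n,k}`. `Sum.inl i` is the star center `uᵢ`
(`0 ≤ i ≤ n-1`), and `Sum.inr (i, j)` is the star leaf `v_{i,j}`; the vertices
`v_{i,0}` (i.e. `j = 0`, corresponding to `v_{i,1}` in 1-based notation) of
consecutive stars are linked into a path. -/
def firecracker (n k : ℕ) : SimpleGraph (Fin n ⊕ Fin n × Fin k) :=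
  SimpleGraph.fromRel (fun a b =>
    match a, b with
    | Sum.inl i, Sum.inr ⟨i', _⟩ => i = i'
    | Sum.inr ⟨i, j⟩, Sum.inr ⟨i', j'⟩ =>
        (j : ℕ) = 0 ∧ (j' : ℕ) = 0 ∧ (i' : ℕ) = (i : ℕ) + 1
    | _, _ => False)

/-- The join `G ∨ K₁`: `G` together with one new vertex adjacent to every
vertex of `G`. -/
def joinK1 (G : SimpleGraph V) : SimpleGraph (V ⊕ Unit) :=
  SimpleGraph.fromRel (fun a b =>
    match a, b with
    | Sum.inl u, Sum.inl v => G.Adj u v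
    | Sum.inl _, Sum.inr _ => True
    | _, _ => False)

abbrev FV (n : ℕ) := (Fin n ⊕ Fin n × Fin 1) ⊕ Unit
def U {n : ℕ} (i : Fin n) : FV n := Sum.inl (Sum.inl i)
def W {n : ℕ} (i : Fin n) : FV n := Sum.inl (Sum.inr (i, 0))
def X {n : ℕ} : FV n := Sum.inr ()
variable {n : ℕ}
def Gn (n : ℕ) : SimpleGraph (FV n) := joinK1 (firecracker n 1)

lemma fin1_eq (j : Fin 1) : j = 0 := Subsingleton.elim _ _

lemma vertex_cases (a : FV n) : (∃ i, a = U i) ∨ (∃ i, a = W i) ∨ a = X := by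
  rcases a with (i | ⟨i, j⟩) | ⟨⟩
  · exact Or.inl ⟨i, rfl⟩
  · exact Or.inr (Or.inl ⟨i, by rw [fin1_eq j]; rfl⟩)
  · exact Or.inr (Or.inr rfl)

lemma adj_UW (i j : Fin n) : (Gn n).Adj (U i) (W j) ↔ i = j := by
  simp [Gn, joinK1, firecracker, SimpleGraph.fromRel_adj, U, W]

lemma adj_WW (i j : Fin n) : (Gn n).Adj (W i) (W j) ↔ ((j:ℕ) = i + 1 ∨ (i:ℕ) = j + 1) := by
  simp [Gn, joinK1, firecracker, SimpleGraph.fromRel_adj, U, W]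
  simp only [Fin.ext_iff]
  omega

lemma adj_UU (i j : Fin n) : ¬ (Gn n).Adj (U i) (U j) := by
  simp [Gn, joinK1, firecracker, SimpleGraph.fromRel_adj, U]

lemma adj_XU (i : Fin n) : (Gn n).Adj X (U i) := by
  simp [Gn, joinK1, SimpleGraph.fromRel_adj, U, X]

lemma adj_XW (i : Fin n) : (Gn n).Adj X (W i) := by
  simp [Gn, joinK1, SimpleGraph.fromRel_adj, W, X]

def pathE (n : ℕ) (j : Fin (n-1)) : Sym2 (FV n) :=
  s(W ⟨j.1, by have := j.2; omega⟩, W ⟨j.1+1, by have := j.2; omega⟩)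

def EE (n : ℕ) : Finset (Sym2 (FV n)) :=
  (Finset.univ.image fun i : Fin n => s(U i, W i)) ∪
  (Finset.univ.image (pathE n)) ∪
  (Finset.univ.image fun i : Fin n => s(X, U i)) ∪
  (Finset.univ.image fun i : Fin n => s(X, W i))


lemma mem_EE (e : Sym2 (FV n)) : e ∈ EE n ↔
    (∃ i, e = s(U i, W i)) ∨ (∃ j : Fin (n-1), e = pathE n j) ∨
    (∃ i, e = s(X, U i)) ∨ (∃ i, e = s(X, W i)) := by
  simp [EE, eq_comm, or_assoc]

lemma edgeFinset_eq : (Gn n).edgeFinset = EE n := by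
  ext e
  induction e with
  | _ a b =>
  rw [SimpleGraph.mem_edgeFinset, SimpleGraph.mem_edgeSet, mem_EE]
  constructor
  · intro hadj
    rcases vertex_cases a with ⟨i, rfl⟩ | ⟨i, rfl⟩ | rfl <;>
      rcases vertex_cases b with ⟨j, rfl⟩ | ⟨j, rfl⟩ | rfl
    · exact absurd hadj (adj_UU i j)
    · have := (adj_UW i j).1 hadj; subst this
      exact Or.inl ⟨i, rfl⟩
    · exact Or.inr (Or.inr (Or.inl ⟨i, Sym2.eq_swap.symm⟩))
    · have := (adj_UW j i).1 hadj.symm; subst this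
      exact Or.inl ⟨j, Sym2.eq_swap.symm⟩
    · rcases (adj_WW i j).1 hadj with h | h
      · have hj : (i:ℕ) < n - 1 := by have := j.2; omega
        refine Or.inr (Or.inl ⟨⟨i.1, hj⟩, ?_⟩)
        simp only [pathE]
        rw [Sym2.eq_iff]
        exact Or.inl ⟨congrArg W (Fin.ext rfl), congrArg W (Fin.ext h)⟩
      · have hi : (j:ℕ) < n - 1 := by have := i.2; omega
        refine Or.inr (Or.inl ⟨⟨j.1, hi⟩, ?_⟩)
        rw [Sym2.eq_swap]
        simp only [pathE]
        rw [Sym2.eq_iff]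
        exact Or.inl ⟨congrArg W (Fin.ext rfl), congrArg W (Fin.ext h)⟩
    · exact Or.inr (Or.inr (Or.inr ⟨i, Sym2.eq_swap.symm⟩))
    · exact Or.inr (Or.inr (Or.inl ⟨j, rfl⟩))
    · exact Or.inr (Or.inr (Or.inr ⟨j, rfl⟩))
    · exact absurd hadj ((Gn n).irrefl)
  · intro he
    rcases he with ⟨i, hi⟩ | ⟨j, hj⟩ | ⟨i, hi⟩ | ⟨i, hi⟩
    · rw [Sym2.eq_iff] at hi
      rcases hi with ⟨rfl, rfl⟩ | ⟨rfl, rfl⟩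
      · exact (adj_UW i i).2 rfl
      · exact ((adj_UW i i).2 rfl).symm
    · rw [pathE, Sym2.eq_iff] at hj
      rcases hj with ⟨rfl, rfl⟩ | ⟨rfl, rfl⟩
      · exact (adj_WW _ _).2 (Or.inl rfl)
      · exact (adj_WW _ _).2 (Or.inr rfl)
    · rw [Sym2.eq_iff] at hi
      rcases hi with ⟨rfl, rfl⟩ | ⟨rfl, rfl⟩
      · exact adj_XU i
      · exact (adj_XU i).symm
    · rw [Sym2.eq_iff] at hi
      rcases hi with ⟨rfl, rfl⟩ | ⟨rfl, rfl⟩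
      · exact adj_XW i
      · exact (adj_XW i).symm
lemma U_ne_W (i j : Fin n) : U i ≠ W j := by simp [U, W]
lemma X_ne_U (i : Fin n) : (X : FV n) ≠ U i := by simp [U, X]
lemma X_ne_W (i : Fin n) : (X : FV n) ≠ W i := by simp [W, X]
lemma U_inj {i j : Fin n} (h : U i = U j) : i = j := by simpa [U] using h
lemma W_inj {i j : Fin n} (h : W i = W j) : i = j := by
  simp only [W, Sum.inl.injEq, Sum.inr.injEq, Prod.mk.injEq] at h; exact h.1

lemma injUW : Function.Injective (fun i : Fin n => s(U i, W i)) := by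
  intro i j h
  rw [Sym2.eq_iff] at h
  rcases h with ⟨h1, _⟩ | ⟨h1, h2⟩
  · exact U_inj h1
  · exact absurd h1 (U_ne_W i j)

lemma injPath : Function.Injective (pathE n) := by
  intro i j h
  simp only [pathE, Sym2.eq_iff] at h
  rcases h with ⟨h1, _⟩ | ⟨h1, h2⟩
  · have h3 := W_inj h1
    rw [Fin.mk.injEq] at h3
    exact Fin.ext h3
  · have h3 := W_inj h1
    have h4 := W_inj h2
    rw [Fin.mk.injEq] at h3 h4
    omega

lemma injXU : Function.Injective (fun i : Fin n => s(X, U i)) := by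
  intro i j h
  rw [Sym2.eq_iff] at h
  rcases h with ⟨_, h2⟩ | ⟨h1, _⟩
  · exact U_inj h2
  · exact absurd h1 (X_ne_U j)

lemma injXW : Function.Injective (fun i : Fin n => s(X, W i)) := by
  intro i j h
  rw [Sym2.eq_iff] at h
  rcases h with ⟨_, h2⟩ | ⟨h1, _⟩
  · exact W_inj h2
  · exact absurd h1 (X_ne_W j)
lemma disj12 : Disjoint (Finset.univ.image fun i : Fin n => s(U i, W i))
    (Finset.univ.image (pathE n)) := by
  rw [Finset.disjoint_left]
  rintro e he1 he2
  simp only [Finset.mem_image, Finset.mem_univ, true_and] at he1 he2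
  obtain ⟨i, rfl⟩ := he1
  obtain ⟨j, hj⟩ := he2
  rw [pathE, Sym2.eq_iff] at hj
  rcases hj with ⟨h1, h2⟩ | ⟨h1, h2⟩ <;> simp [U, W] at h1 h2

lemma disj13 : Disjoint (Finset.univ.image fun i : Fin n => s(U i, W i))
    (Finset.univ.image fun i : Fin n => s(X, U i)) := by
  rw [Finset.disjoint_left]
  rintro e he1 he2
  simp only [Finset.mem_image, Finset.mem_univ, true_and] at he1 he2
  obtain ⟨i, rfl⟩ := he1
  obtain ⟨j, hj⟩ := he2
  rw [Sym2.eq_iff] at hj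
  rcases hj with ⟨h1, h2⟩ | ⟨h1, h2⟩ <;> simp [U, W, X] at h1 h2

lemma disj14 : Disjoint (Finset.univ.image fun i : Fin n => s(U i, W i))
    (Finset.univ.image fun i : Fin n => s(X, W i)) := by
  rw [Finset.disjoint_left]
  rintro e he1 he2
  simp only [Finset.mem_image, Finset.mem_univ, true_and] at he1 he2
  obtain ⟨i, rfl⟩ := he1
  obtain ⟨j, hj⟩ := he2
  rw [Sym2.eq_iff] at hj
  rcases hj with ⟨h1, h2⟩ | ⟨h1, h2⟩ <;> simp [U, W, X] at h1 h2

lemma disj23 : Disjoint (Finset.univ.image (pathE n))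
    (Finset.univ.image fun i : Fin n => s(X, U i)) := by
  rw [Finset.disjoint_left]
  rintro e he1 he2
  simp only [Finset.mem_image, Finset.mem_univ, true_and] at he1 he2
  obtain ⟨i, rfl⟩ := he1
  obtain ⟨j, hj⟩ := he2
  rw [pathE, Sym2.eq_iff] at hj
  rcases hj with ⟨h1, h2⟩ | ⟨h1, h2⟩ <;> simp [U, W, X] at h1 h2

lemma disj24 : Disjoint (Finset.univ.image (pathE n))
    (Finset.univ.image fun i : Fin n => s(X, W i)) := by
  rw [Finset.disjoint_left]
  rintro e he1 he2
  simp only [Finset.mem_image, Finset.mem_univ, true_and] at he1 he2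
  obtain ⟨i, rfl⟩ := he1
  obtain ⟨j, hj⟩ := he2
  rw [pathE, Sym2.eq_iff] at hj
  rcases hj with ⟨h1, h2⟩ | ⟨h1, h2⟩ <;> simp [U, W, X] at h1 h2

lemma disj34 : Disjoint (Finset.univ.image fun i : Fin n => s(X, U i))
    (Finset.univ.image fun i : Fin n => s(X, W i)) := by
  rw [Finset.disjoint_left]
  rintro e he1 he2
  simp only [Finset.mem_image, Finset.mem_univ, true_and] at he1 he2
  obtain ⟨i, rfl⟩ := he1
  obtain ⟨j, hj⟩ := he2
  rw [Sym2.eq_iff] at hj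
  rcases hj with ⟨h1, h2⟩ | ⟨h1, h2⟩ <;> simp [U, W, X] at h1 h2

lemma card_EE (hn : 3 ≤ n) : (EE n).card = 4*n - 1 := by
  rw [EE]
  rw [Finset.card_union_of_disjoint, Finset.card_union_of_disjoint,
    Finset.card_union_of_disjoint]
  · rw [Finset.card_image_of_injective _ injUW, Finset.card_image_of_injective _ injPath,
      Finset.card_image_of_injective _ injXU, Finset.card_image_of_injective _ injXW]
    simp only [Finset.card_univ, Fintype.card_fin]
    omega
  · exact disj12
  · rw [Finset.disjoint_union_left]; exact ⟨disj13, disj23⟩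
  · rw [Finset.disjoint_union_left, Finset.disjoint_union_left]
    exact ⟨⟨disj14, disj24⟩, disj34⟩
def pp (n : ℕ) : ℕ := (n+1)/2
def cc (n i : ℕ) : ℕ := if i % 2 = 0 then n + i/2 else n + pp n + i/2
def qq (n j : ℕ) : ℕ :=
  if n % 2 = 0 ∧ j = n-2 then pp n
  else if j % 2 = 0 then pp n - 1 - j/2 else n/2 + 1 + j/2
def suu (n i : ℕ) : ℕ := if i % 2 = 0 then 4*n - 1 - i/2 else 4*n - 2 - pp n - i/2
def svv (n i : ℕ) : ℕ :=
  if i = 0 then 4*n - 1 - pp n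
  else if i % 2 = 0 then (if n % 2 = 0 ∧ i = n-2 then 2*n else 3*n - 1 - i/2)
  else (if n % 2 = 1 then 2*n + pp n - 2 - i/2
        else if i = n-1 then 2*n + pp n else 2*n + pp n - 1 - i/2)


lemma qq_range (hn : 3 ≤ n) {j : ℕ} (hj : j < n - 1) : 1 ≤ qq n j ∧ qq n j ≤ n - 1 := by
  unfold qq pp; split_ifs <;> omega

lemma cc_range (hn : 3 ≤ n) {i : ℕ} (hi : i < n) : n ≤ cc n i ∧ cc n i ≤ 2*n - 1 := by
  unfold cc pp; split_ifs <;> omega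

lemma suu_range (hn : 3 ≤ n) {i : ℕ} (hi : i < n) : 2*n ≤ suu n i ∧ suu n i ≤ 4*n - 1 := by
  unfold suu pp; split_ifs <;> omega

lemma svv_range (hn : 3 ≤ n) {i : ℕ} (hi : i < n) : 2*n ≤ svv n i ∧ svv n i ≤ 4*n - 1 := by
  unfold svv pp; split_ifs <;> omega

lemma qq_inj (hn : 3 ≤ n) {j k : ℕ} (hj : j < n - 1) (hk : k < n - 1)
    (h : qq n j = qq n k) : j = k := by
  unfold qq pp at h; split_ifs at h <;> omega

lemma cc_inj (hn : 3 ≤ n) {j k : ℕ} (hj : j < n) (hk : k < n)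
    (h : cc n j = cc n k) : j = k := by
  unfold cc pp at h; split_ifs at h <;> omega

lemma suu_inj (hn : 3 ≤ n) {j k : ℕ} (hj : j < n) (hk : k < n)
    (h : suu n j = suu n k) : j = k := by
  unfold suu pp at h; split_ifs at h <;> omega

lemma svv_inj (hn : 3 ≤ n) {j k : ℕ} (hj : j < n) (hk : k < n)
    (h : svv n j = svv n k) : j = k := by
  unfold svv pp at h; split_ifs at h <;> omega

lemma suu_ne_svv (hn : 3 ≤ n) {j k : ℕ} (hj : j < n) (hk : k < n) :
    suu n j ≠ svv n k := by
  unfold suu svv pp; split_ifs <;> omega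

lemma wu_eq (hn : 3 ≤ n) {i : ℕ} (hi : i < n) :
    cc n i + suu n i = if i % 2 = 0 then 5*n - 1 else 5*n - 2 := by
  unfold cc suu pp; split_ifs <;> omega

lemma wv_eq (hn : 3 ≤ n) {i : ℕ} (hi : i < n) :
    cc n i + ((if 1 ≤ i then qq n (i-1) else 0) + (if i + 1 ≤ n - 1 then qq n i else 0))
      + svv n i = if i % 2 = 0 then 5*n - 2 else 5*n - 1 := by
  unfold cc qq svv pp; split_ifs <;> omega


def FF (n : ℕ) : FV n → FV n → ℕ
  | Sum.inl (Sum.inl i), Sum.inl (Sum.inr (j,_)) => if i = j then cc n i else 0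
  | Sum.inl (Sum.inr (j,_)), Sum.inl (Sum.inl i) => if i = j then cc n i else 0
  | Sum.inl (Sum.inr (i,_)), Sum.inl (Sum.inr (j,_)) =>
      if (j:ℕ) = (i:ℕ)+1 then qq n i else if (i:ℕ) = (j:ℕ)+1 then qq n j else 0
  | Sum.inr _, Sum.inl (Sum.inl i) => suu n i
  | Sum.inl (Sum.inl i), Sum.inr _ => suu n i
  | Sum.inr _, Sum.inl (Sum.inr (i,_)) => svv n i
  | Sum.inl (Sum.inr (i,_)), Sum.inr _ => svv n i
  | _, _ => 0

lemma FF_symm (n : ℕ) (a b : FV n) : FF n a b = FF n b a := by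
  rcases a with (ai | ⟨ai, az⟩) | ⟨⟩ <;> rcases b with (bi | ⟨bi, bz⟩) | ⟨⟩ <;>
    simp only [FF]
  · split_ifs <;> omega

def fE (n : ℕ) : Sym2 (FV n) → ℕ := Sym2.lift ⟨FF n, FF_symm n⟩

lemma fE_UW (i : Fin n) : fE n s(U i, W i) = cc n i := by
  simp [fE, U, W, FF]

lemma fE_path (j : Fin (n-1)) : fE n (pathE n j) = qq n j := by
  simp [fE, pathE, W, FF]

lemma fE_XU (i : Fin n) : fE n s(X, U i) = suu n i := by
  simp [fE, U, X, FF]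

lemma fE_XW (i : Fin n) : fE n s(X, W i) = svv n i := by
  simp [fE, W, X, FF]
lemma weight_Gn (f : Sym2 (FV n) → ℕ) (u : FV n) :
    weight (Gn n) f u =
      (∑ i : Fin n, if u ∈ s(U i, W i) then f s(U i, W i) else 0) +
      (∑ j : Fin (n-1), if u ∈ pathE n j then f (pathE n j) else 0) +
      (∑ i : Fin n, if u ∈ s(X, U i) then f s(X, U i) else 0) +
      (∑ i : Fin n, if u ∈ s(X, W i) then f s(X, W i) else 0) := by
  rw [weight, edgeFinset_eq, EE]
  rw [Finset.sum_union (by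
      rw [Finset.disjoint_union_left, Finset.disjoint_union_left]
      exact ⟨⟨disj14, disj24⟩, disj34⟩),
    Finset.sum_union (by rw [Finset.disjoint_union_left]; exact ⟨disj13, disj23⟩),
    Finset.sum_union disj12]
  rw [Finset.sum_image (fun x _ y _ h => injUW h),
    Finset.sum_image (fun x _ y _ h => injPath h),
    Finset.sum_image (fun x _ y _ h => injXU h),
    Finset.sum_image (fun x _ y _ h => injXW h)]
  congr!

lemma ite_or_split {P Q : Prop} [Decidable P] [Decidable Q] (h : ¬(P ∧ Q)) (x : ℕ) :
    (if P ∨ Q then x else 0) = (if P then x else 0) + (if Q then x else 0) := by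
  split_ifs <;> simp_all

lemma sumA (m : ℕ) (g : ℕ → ℕ) (k : ℕ) :
    (∑ j : Fin k, if m = j.1 then g j.1 else 0) = if m < k then g m else 0 := by
  rw [Fin.sum_univ_eq_sum_range (fun j => if m = j then g j else 0)]
  rw [Finset.sum_ite_eq]
  simp [Finset.mem_range]

lemma sumB (m : ℕ) (g : ℕ → ℕ) (k : ℕ) :
    (∑ j : Fin k, if m = j.1 + 1 then g j.1 else 0)
      = if 1 ≤ m ∧ m ≤ k then g (m-1) else 0 := by
  rw [Fin.sum_univ_eq_sum_range (fun j => if m = j + 1 then g j else 0)]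
  rcases m with _ | m'
  · simp
  · simp only [Nat.add_right_cancel_iff]
    rw [Finset.sum_ite_eq]
    simp only [Finset.mem_range, Nat.add_sub_cancel]
    split_ifs <;> first | rfl | (exfalso; omega)

lemma weight_U (i : Fin n) : weight (Gn n) (fE n) (U i) = cc n i.1 + suu n i.1 := by
  rw [weight_Gn]
  have h1 : (∑ j : Fin n, if U i ∈ s(U j, W j) then fE n s(U j, W j) else 0)
      = cc n i.1 := by
    have : ∀ j : Fin n, (if U i ∈ s(U j, W j) then fE n s(U j, W j) else 0)
        = if i = j then cc n j.1 else 0 := by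
      intro j
      rw [fE_UW]
      congr 1
      simp [Sym2.mem_iff, U, W]
    rw [Finset.sum_congr rfl (fun j _ => this j), Finset.sum_ite_eq]
    simp
  have h2 : (∑ j : Fin (n-1), if U i ∈ pathE n j then fE n (pathE n j) else 0) = 0 := by
    apply Finset.sum_eq_zero
    intro j _
    rw [if_neg]
    simp [pathE, Sym2.mem_iff, U, W]
  have h3 : (∑ j : Fin n, if U i ∈ s(X, U j) then fE n s(X, U j) else 0) = suu n i.1 := by
    have : ∀ j : Fin n, (if U i ∈ s(X, U j) then fE n s(X, U j) else 0)
        = if i = j then suu n j.1 else 0 := by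
      intro j
      rw [fE_XU]
      congr 1
      simp [Sym2.mem_iff, U, X]
    rw [Finset.sum_congr rfl (fun j _ => this j), Finset.sum_ite_eq]
    simp
  have h4 : (∑ j : Fin n, if U i ∈ s(X, W j) then fE n s(X, W j) else 0) = 0 := by
    apply Finset.sum_eq_zero
    intro j _
    rw [if_neg]
    simp [Sym2.mem_iff, U, W, X]
  rw [h1, h2, h3, h4]
  omega
lemma wv_eq' (hn : 3 ≤ n) {i : ℕ} (hi : i < n) :
    cc n i + ((if i < n-1 then qq n i else 0) + (if 1 ≤ i ∧ i ≤ n-1 then qq n (i-1) else 0))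
      + svv n i = if i % 2 = 0 then 5*n - 2 else 5*n - 1 := by
  unfold cc qq svv pp; split_ifs <;> omega

lemma weight_W (i : Fin n) : weight (Gn n) (fE n) (W i) =
    cc n i.1 + ((if i.1 < n-1 then qq n i.1 else 0)
      + (if 1 ≤ i.1 ∧ i.1 ≤ n-1 then qq n (i.1-1) else 0)) + svv n i.1 := by
  rw [weight_Gn]
  have h1 : (∑ j : Fin n, if W i ∈ s(U j, W j) then fE n s(U j, W j) else 0)
      = cc n i.1 := by
    have : ∀ j : Fin n, (if W i ∈ s(U j, W j) then fE n s(U j, W j) else 0)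
        = if i = j then cc n j.1 else 0 := by
      intro j
      rw [fE_UW]
      congr 1
      simp only [Sym2.mem_iff, U, W, eq_iff_iff]
      constructor
      · rintro (h | h)
        · simp at h
        · simp only [Sum.inl.injEq, Sum.inr.injEq, Prod.mk.injEq] at h
          exact Fin.ext (congrArg Fin.val h.1)
      · rintro rfl; exact Or.inr rfl
    rw [Finset.sum_congr rfl (fun j _ => this j), Finset.sum_ite_eq]
    simp
  have h2 : (∑ j : Fin (n-1), if W i ∈ pathE n j then fE n (pathE n j) else 0)
      = (if i.1 < n-1 then qq n i.1 else 0)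
        + (if 1 ≤ i.1 ∧ i.1 ≤ n-1 then qq n (i.1-1) else 0) := by
    have key : ∀ j : Fin (n-1), (if W i ∈ pathE n j then fE n (pathE n j) else 0)
        = (if i.1 = j.1 then qq n j.1 else 0) + (if i.1 = j.1 + 1 then qq n j.1 else 0) := by
      intro j
      rw [fE_path]
      have hiff : (W i ∈ pathE n j) ↔ (i.1 = j.1 ∨ i.1 = j.1 + 1) := by
        simp only [pathE, Sym2.mem_iff, W, Sum.inl.injEq, Sum.inr.injEq, Prod.mk.injEq]
        constructor
        · rintro (⟨h, -⟩ | ⟨h, -⟩)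
          · exact Or.inl (congrArg Fin.val h)
          · exact Or.inr (congrArg Fin.val h)
        · rintro (h | h)
          · exact Or.inl ⟨Fin.ext h, trivial⟩
          · exact Or.inr ⟨Fin.ext h, trivial⟩
      rw [if_congr hiff rfl rfl]
      have hx : ¬((i.1 : ℕ) = j.1 ∧ (i.1 : ℕ) = j.1 + 1) := by omega
      exact ite_or_split hx _
    rw [Finset.sum_congr rfl (fun j _ => key j), Finset.sum_add_distrib, sumA, sumB]
  have h3 : (∑ j : Fin n, if W i ∈ s(X, U j) then fE n s(X, U j) else 0) = 0 := by
    apply Finset.sum_eq_zero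
    intro j _
    rw [if_neg]
    simp [Sym2.mem_iff, U, W, X]
  have h4 : (∑ j : Fin n, if W i ∈ s(X, W j) then fE n s(X, W j) else 0) = svv n i.1 := by
    have : ∀ j : Fin n, (if W i ∈ s(X, W j) then fE n s(X, W j) else 0)
        = if i = j then svv n j.1 else 0 := by
      intro j
      rw [fE_XW]
      congr 1
      simp only [Sym2.mem_iff, W, X, eq_iff_iff]
      constructor
      · rintro (h | h)
        · simp at h
        · simp only [Sum.inl.injEq, Sum.inr.injEq, Prod.mk.injEq] at h
          exact Fin.ext (congrArg Fin.val h.1)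
      · rintro rfl; exact Or.inr rfl
    rw [Finset.sum_congr rfl (fun j _ => this j), Finset.sum_ite_eq]
    simp
  rw [h1, h2, h3, h4]
  omega

lemma weight_X : weight (Gn n) (fE n) (X : FV n) =
    (∑ i : Fin n, suu n i.1) + (∑ i : Fin n, svv n i.1) := by
  rw [weight_Gn]
  have h1 : (∑ j : Fin n, if (X : FV n) ∈ s(U j, W j) then fE n s(U j, W j) else 0) = 0 := by
    apply Finset.sum_eq_zero
    intro j _
    rw [if_neg]
    simp [Sym2.mem_iff, U, W, X]
  have h2 : (∑ j : Fin (n-1), if (X : FV n) ∈ pathE n j then fE n (pathE n j) else 0) = 0 := by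
    apply Finset.sum_eq_zero
    intro j _
    rw [if_neg]
    simp [pathE, Sym2.mem_iff, W, X]
  have h3 : (∑ j : Fin n, if (X : FV n) ∈ s(X, U j) then fE n s(X, U j) else 0)
      = ∑ i : Fin n, suu n i.1 := by
    apply Finset.sum_congr rfl
    intro j _
    rw [if_pos (by simp [Sym2.mem_iff]), fE_XU]
  have h4 : (∑ j : Fin n, if (X : FV n) ∈ s(X, W j) then fE n s(X, W j) else 0)
      = ∑ i : Fin n, svv n i.1 := by
    apply Finset.sum_congr rfl
    intro j _
    rw [if_pos (by simp [Sym2.mem_iff]), fE_XW]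
  rw [h1, h2, h3, h4]
  omega
lemma weight_U_val (hn : 3 ≤ n) (i : Fin n) :
    weight (Gn n) (fE n) (U i) = if i.1 % 2 = 0 then 5*n-1 else 5*n-2 := by
  rw [weight_U, wu_eq hn i.2]

lemma weight_W_val (hn : 3 ≤ n) (i : Fin n) :
    weight (Gn n) (fE n) (W i) = if i.1 % 2 = 0 then 5*n-2 else 5*n-1 := by
  rw [weight_W]; exact wv_eq' hn i.2

lemma weight_X_big (hn : 3 ≤ n) : 5*n - 1 < weight (Gn n) (fE n) (X : FV n) := by
  rw [weight_X]
  have h1 : Finset.univ.card • (2*n) ≤ ∑ i : Fin n, suu n i.1 :=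
    Finset.card_nsmul_le_sum _ _ _ (fun i _ => (suu_range hn i.2).1)
  simp only [Finset.card_univ, Fintype.card_fin, smul_eq_mul] at h1
  have h2 : 3 * (2*n) ≤ n * (2*n) := Nat.mul_le_mul_right _ hn
  omega

lemma weights_distinct (hn : 3 ≤ n) :
    ∀ u v, (Gn n).Adj u v → weight (Gn n) (fE n) u ≠ weight (Gn n) (fE n) v := by
  intro u v hadj
  rcases vertex_cases u with ⟨i, rfl⟩ | ⟨i, rfl⟩ | rfl <;>
    rcases vertex_cases v with ⟨j, rfl⟩ | ⟨j, rfl⟩ | rfl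
  · exact absurd hadj (adj_UU i j)
  · have := (adj_UW i j).1 hadj; subst this
    rw [weight_U_val hn, weight_W_val hn]
    split_ifs <;> omega
  · rw [weight_U_val hn]
    have := weight_X_big hn
    split_ifs <;> omega
  · have := (adj_UW j i).1 hadj.symm; subst this
    rw [weight_U_val hn, weight_W_val hn]
    split_ifs <;> omega
  · have h := (adj_WW i j).1 hadj
    rw [weight_W_val hn, weight_W_val hn]
    split_ifs <;> omega
  · rw [weight_W_val hn]
    have := weight_X_big hn
    split_ifs <;> omega
  · rw [weight_U_val hn]
    have := weight_X_big hn
    split_ifs <;> omega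
  · rw [weight_W_val hn]
    have := weight_X_big hn
    split_ifs <;> omega
  · exact absurd hadj ((Gn n).irrefl)

lemma image_weight (hn : 3 ≤ n) :
    Finset.univ.image (weight (Gn n) (fE n))
      = {5*n-2, 5*n-1, weight (Gn n) (fE n) (X : FV n)} := by
  ext y
  simp only [Finset.mem_image, Finset.mem_insert, Finset.mem_singleton,
    Finset.mem_univ, true_and]
  constructor
  · rintro ⟨v, rfl⟩
    rcases vertex_cases v with ⟨i, rfl⟩ | ⟨i, rfl⟩ | rfl
    · rw [weight_U_val hn]; split_ifs <;> tauto
    · rw [weight_W_val hn]; split_ifs <;> tauto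
    · tauto
  · rintro (rfl | rfl | rfl)
    · exact ⟨W ⟨0, by omega⟩, by rw [weight_W_val hn]; norm_num⟩
    · exact ⟨U ⟨0, by omega⟩, by rw [weight_U_val hn]; norm_num⟩
    · exact ⟨X, rfl⟩

lemma card_image_weight (hn : 3 ≤ n) :
    (Finset.univ.image (weight (Gn n) (fE n))).card = 3 := by
  rw [image_weight hn]
  have hC := weight_X_big hn
  rw [Finset.card_insert_of_notMem (by simp; omega),
    Finset.card_insert_of_notMem (by simp; omega), Finset.card_singleton]
lemma fE_mem_Icc (hn : 3 ≤ n) : ∀ e ∈ EE n, fE n e ∈ Finset.Icc 1 (4*n-1) := by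
  intro e he
  rw [mem_EE] at he
  simp only [Finset.mem_Icc]
  rcases he with ⟨i, rfl⟩ | ⟨j, rfl⟩ | ⟨i, rfl⟩ | ⟨i, rfl⟩
  · rw [fE_UW]; have := cc_range hn i.2; omega
  · rw [fE_path]; have := qq_range hn j.2; omega
  · rw [fE_XU]; have := suu_range hn i.2; omega
  · rw [fE_XW]; have := svv_range hn i.2; omega

lemma fE_injOn (hn : 3 ≤ n) :
    ∀ e1 ∈ EE n, ∀ e2 ∈ EE n, fE n e1 = fE n e2 → e1 = e2 := by
  intro e1 h1 e2 h2 heq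
  rw [mem_EE] at h1 h2
  rcases h1 with ⟨i, rfl⟩ | ⟨i, rfl⟩ | ⟨i, rfl⟩ | ⟨i, rfl⟩ <;>
    rcases h2 with ⟨j, rfl⟩ | ⟨j, rfl⟩ | ⟨j, rfl⟩ | ⟨j, rfl⟩ <;>
    simp only [fE_UW, fE_path, fE_XU, fE_XW] at heq
  · exact congrArg (fun i => s(U i, W i)) (Fin.ext (cc_inj hn i.2 j.2 heq))
  · have := cc_range hn i.2; have := qq_range hn j.2; omega
  · have := cc_range hn i.2; have := suu_range hn j.2; omega
  · have := cc_range hn i.2; have := svv_range hn j.2; omega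
  · have := qq_range hn i.2; have := cc_range hn j.2; omega
  · exact congrArg (pathE n) (Fin.ext (qq_inj hn i.2 j.2 heq))
  · have := qq_range hn i.2; have := suu_range hn j.2; omega
  · have := qq_range hn i.2; have := svv_range hn j.2; omega
  · have := suu_range hn i.2; have := cc_range hn j.2; omega
  · have := suu_range hn i.2; have := qq_range hn j.2; omega
  · exact congrArg (fun i => s(X, U i)) (Fin.ext (suu_inj hn i.2 j.2 heq))
  · exact absurd heq (suu_ne_svv hn i.2 j.2)
  · have := svv_range hn i.2; have := cc_range hn j.2; omega
  · have := svv_range hn i.2; have := qq_range hn j.2; omega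
  · exact absurd heq.symm (suu_ne_svv hn j.2 i.2)
  · exact congrArg (fun i => s(X, W i)) (Fin.ext (svv_inj hn i.2 j.2 heq))

lemma image_EE (hn : 3 ≤ n) : (EE n).image (fE n) = Finset.Icc 1 (4*n-1) := by
  apply Finset.eq_of_subset_of_card_le
  · exact Finset.image_subset_iff.2 (fE_mem_Icc hn)
  · rw [Nat.card_Icc, Finset.card_image_of_injOn (fun a ha b hb h => fE_injOn hn a ha b hb h),
      card_EE hn]
    omega

lemma card_edge (hn : 3 ≤ n) : (Gn n).edgeFinset.card = 4*n-1 := by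
  rw [edgeFinset_eq]; exact card_EE hn

lemma bijOn_fE (hn : 3 ≤ n) :
    Set.BijOn (fE n) (Gn n).edgeSet (Set.Icc 1 ((Gn n).edgeFinset.card)) := by
  have hes : (Gn n).edgeSet = ↑(EE n) := by
    rw [← SimpleGraph.coe_edgeFinset, edgeFinset_eq]
  rw [hes, card_edge hn, ← Finset.coe_Icc, ← image_EE hn]
  refine ⟨fun e he => ?_, fun a ha b hb h => fE_injOn hn a (Finset.mem_coe.1 ha)
    b (Finset.mem_coe.1 hb) h, ?_⟩
  · exact Finset.mem_coe.2 (Finset.mem_image_of_mem _ (Finset.mem_coe.1 he))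
  · rw [Finset.coe_image]
    exact Set.Subset.rfl

/-- For every integer `n ≥ 3`, the local antimagic chromatic number of the
join `F_{n,1} ∨ K₁` equals 3. -/
theorem chiLA_firecracker_one_join_K1 {n : ℕ} (hn : 3 ≤ n) :
    chiLA (joinK1 (firecracker n 1)) = 3 := by
  have hEq : joinK1 (firecracker n 1) = Gn n := rfl
  rw [hEq]
  have h3 : 3 ∈ {c | ∃ f, IsLocalAntimagic (Gn n) f ∧ colorCount (Gn n) f = c} :=
    ⟨fE n, ⟨bijOn_fE hn, weights_distinct hn⟩, card_image_weight hn⟩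
  refine le_antisymm (Nat.sInf_le h3) (le_csInf ⟨3, h3⟩ ?_)
  rintro b ⟨f, ⟨hbij, hdist⟩, rfl⟩
  set i0 : Fin n := ⟨0, by omega⟩ with hi0
  set wt := weight (Gn n) f with hwt
  have hUW := hdist _ _ ((adj_UW i0 i0).2 rfl)
  have hXU := hdist _ _ (adj_XU i0)
  have hXW := hdist _ _ (adj_XW i0)
  have hsub : ({wt X, wt (U i0), wt (W i0)} : Finset ℕ) ⊆ Finset.univ.image wt := by
    intro y hy
    simp only [Finset.mem_insert, Finset.mem_singleton] at hy
    rcases hy with rfl | rfl | rfl <;> exact Finset.mem_image_of_mem _ (Finset.mem_univ _)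
  have hcard3 : ({wt X, wt (U i0), wt (W i0)} : Finset ℕ).card = 3 := by
    rw [Finset.card_insert_of_notMem (by
        simp only [Finset.mem_insert, Finset.mem_singleton]
        push_neg
        exact ⟨hXU, hXW⟩),
      Finset.card_insert_of_notMem (by simpa using hUW), Finset.card_singleton]
  calc (3:ℕ) = ({wt X, wt (U i0), wt (W i0)} : Finset ℕ).card := hcard3.symm
    _ ≤ (Finset.univ.image wt).card := Finset.card_le_card hsub
    _ = colorCount (Gn n) f := rfl


end LocalAntimagic
end
end

section
/- For every integer k ≥ 3, the local antimagic total chromatic number of the firecracker graph F_{2,k} satisfies 2 ≤ χ_lat(F_{2,k}) ≤ 3. -/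
/-!
Local antimagic (total) labelings and chromatic numbers, firecracker graphs,
stars, double stars, joins, and edge-corona products.
-/

open scoped Classical

noncomputable section

namespace LocalAntimagic

variable {V : Type*} [Fintype V]

/-!
Every local antimagic total labeling of a graph with an edge shows at least two colours, and
`F_{2,k}` has one with three. With stars `i ∈ {0, 1}` and leaves `j ∈ {0, …, k-1}`, the
pendant edges `uᵢ v_{i,j}` with `j ≥ 1` get the labels `3, …, 2k` via
`2j + 1 + (i + j) % 2`, and the leaf `v_{i,j}` gets `4k + 4` minus its edge label; the seven
remaining elements get `1, 2, 2k+1, 2k+2, 2k+3, 4k+2, 4k+3`. Then every leaf other than `v_{1,0}`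
has weight `4k + 4`, `v_{1,0}` has weight `10k + 7`, and both centres have weight
`k² + 4k + 3 + ⌊k/2⌋`: alternating the parity of the labels between the two stars makes the two
centre sums differ by at most one, and the term `k % 2` in the labels of `u₁ v_{1,0}` and
`v_{1,0}` absorbs that difference.
-/

theorem _root_.Set.InjOn.bijOn_of_ncard_le {α β : Type*} {f : α → β} {s : Set α} {t : Set β}
    (hinj : Set.InjOn f s) (hmaps : Set.MapsTo f s t) (hcard : t.ncard ≤ s.ncard)
    (ht : t.Finite) : Set.BijOn f s t :=
  ⟨hmaps, hinj, (Set.eq_of_subset_of_ncard_le hmaps.image_subset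
    (by rwa [hinj.ncard_image]) ht).symm.subset⟩

section General

variable {G : SimpleGraph V} {gv : V → ℕ} {ge : Sym2 V → ℕ}

theorem ncard_range_inl_union_image_inr_edgeSet :
    (Set.range Sum.inl ∪ Sum.inr '' G.edgeSet : Set (V ⊕ Sym2 V)).ncard =
      Fintype.card V + G.edgeFinset.card := by
  rw [Set.ncard_union_eq (by simp [Set.disjoint_left]),
    Set.ncard_range_of_injective Sum.inl_injective,
    Set.ncard_image_of_injective _ Sum.inr_injective, ← SimpleGraph.coe_edgeFinset,
    Set.ncard_coe_finset, Nat.card_eq_fintype_card]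

theorem isLocalAntimagicTotal_of_injOn
    (hmaps : Set.MapsTo (Sum.elim gv ge) (Set.range Sum.inl ∪ Sum.inr '' G.edgeSet)
      (Set.Icc 1 (Fintype.card V + G.edgeFinset.card)))
    (hinj : Set.InjOn (Sum.elim gv ge) (Set.range Sum.inl ∪ Sum.inr '' G.edgeSet))
    (hadj : ∀ u v, G.Adj u v → totalWeight G gv ge u ≠ totalWeight G gv ge v) :
    IsLocalAntimagicTotal G gv ge :=
  ⟨hinj.bijOn_of_ncard_le hmaps
    (by rw [ncard_range_inl_union_image_inr_edgeSet, Set.ncard_Icc_nat]; omega)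
    (Set.finite_Icc _ _), hadj⟩

theorem chiLAT_le_totalColorCount (h : IsLocalAntimagicTotal G gv ge) :
    chiLAT G ≤ totalColorCount G gv ge :=
  Nat.sInf_le ⟨gv, ge, h, rfl⟩

theorem two_le_totalColorCount (h : IsLocalAntimagicTotal G gv ge) {u v : V} (huv : G.Adj u v) :
    2 ≤ totalColorCount G gv ge :=
  Finset.one_lt_card.2 ⟨_, Finset.mem_image_of_mem _ (Finset.mem_univ u),
    _, Finset.mem_image_of_mem _ (Finset.mem_univ v), h.2 u v huv⟩

theorem two_le_chiLAT (h : IsLocalAntimagicTotal G gv ge) {u v : V} (huv : G.Adj u v) :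
    2 ≤ chiLAT G := by
  obtain ⟨gv', ge', h', hc⟩ : chiLAT G ∈ {c | ∃ gv ge, IsLocalAntimagicTotal G gv ge ∧
      totalColorCount G gv ge = c} := Nat.sInf_mem ⟨_, gv, ge, h, rfl⟩
  exact hc ▸ two_le_totalColorCount h' huv

end General

section Firecracker

variable {k : ℕ}

def pendantEdge (q : Fin 2 × Fin k) : Sym2 (Fin 2 ⊕ Fin 2 × Fin k) := s(Sum.inl q.1, Sum.inr q)

theorem pendantEdge_injective : Function.Injective (pendantEdge (k := k)) := by
  intro q r h
  simpa [pendantEdge, Prod.ext_iff, eq_comm] using h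

theorem firecracker_two_adj_inl_inr (q : Fin 2 × Fin k) :
    (firecracker 2 k).Adj (Sum.inl q.1) (Sum.inr q) := by
  simp [firecracker]

variable [NeZero k]

variable (k) in
def linkEdge : Sym2 (Fin 2 ⊕ Fin 2 × Fin k) := s(Sum.inr (0, 0), Sum.inr (1, 0))

theorem edgeSet_firecracker_two :
    (firecracker 2 k).edgeSet = insert (linkEdge k) (Set.range pendantEdge) := by
  ext e
  induction e using Sym2.ind with
  | _ a b =>
    rcases a with i | ⟨i, j⟩ <;> rcases b with i' | ⟨i', j'⟩ <;>
      simp [firecracker, pendantEdge, linkEdge, eq_comm]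
    fin_cases i <;> fin_cases i' <;> simp [and_comm]

theorem edgeFinset_firecracker_two :
    (firecracker 2 k).edgeFinset = insert (linkEdge k) (Finset.univ.image pendantEdge) :=
  Finset.coe_injective (by simp [edgeSet_firecracker_two])

theorem linkEdge_notMem_image_pendantEdge :
    linkEdge k ∉ Finset.univ.image pendantEdge := by
  simp [linkEdge, pendantEdge]

theorem card_edgeFinset_firecracker_two : (firecracker 2 k).edgeFinset.card = 2 * k + 1 := by
  rw [edgeFinset_firecracker_two, Finset.card_insert_of_notMem linkEdge_notMem_image_pendantEdge,
    Finset.card_image_of_injective _ pendantEdge_injective]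
  simp

theorem weight_firecracker_two_inl (f : Sym2 (Fin 2 ⊕ Fin 2 × Fin k) → ℕ) (i : Fin 2) :
    weight (firecracker 2 k) f (Sum.inl i) = ∑ j, f (pendantEdge (i, j)) := by
  rw [weight, edgeFinset_firecracker_two, Finset.sum_insert linkEdge_notMem_image_pendantEdge,
    Finset.sum_image fun q _ r _ h => pendantEdge_injective h]
  simp [linkEdge, pendantEdge, Fintype.sum_prod_type]

theorem weight_firecracker_two_inr (f : Sym2 (Fin 2 ⊕ Fin 2 × Fin k) → ℕ)
    (q : Fin 2 × Fin k) :
    weight (firecracker 2 k) f (Sum.inr q) =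
      f (pendantEdge q) + if q.2 = 0 then f (linkEdge k) else 0 := by
  rw [weight, edgeFinset_firecracker_two, Finset.sum_insert linkEdge_notMem_image_pendantEdge,
    Finset.sum_image fun q _ r _ h => pendantEdge_injective h]
  have : Sum.inr q ∈ linkEdge k ↔ q.2 = 0 := by
    obtain ⟨i, j⟩ := q
    fin_cases i <;> simp [linkEdge]
  simp [this, pendantEdge, add_comm]

theorem forall_mem_range_inl_union_image_inr_edgeSet_firecracker_two
    {P : (Fin 2 ⊕ Fin 2 × Fin k) ⊕ Sym2 (Fin 2 ⊕ Fin 2 × Fin k) → Prop} :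
    (∀ x ∈ Set.range Sum.inl ∪ Sum.inr '' (firecracker 2 k).edgeSet, P x) ↔
      (∀ i, P (Sum.inl (Sum.inl i))) ∧ (∀ q, P (Sum.inl (Sum.inr q))) ∧
        (∀ q, P (Sum.inr (pendantEdge q))) ∧ P (Sum.inr (linkEdge k)) := by
  simp only [Set.mem_union, or_imp, forall_and, Set.forall_mem_range, Set.forall_mem_image,
    edgeSet_firecracker_two, Set.forall_mem_insert, Sum.forall]
  tauto

end Firecracker

def centerLabel (k i : ℕ) : ℕ := if i = 0 then 2 * k + 3 else 2

def pendantLabel (k i j : ℕ) : ℕ :=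
  if j = 0 then (if i = 0 then 2 * k + 1 else 4 * k + 3 - k % 2) else 2 * j + 1 + (i + j) % 2

def leafLabel (k i j : ℕ) : ℕ :=
  if j = 0 then (if i = 0 then 1 else 4 * k + 2 + k % 2) else 4 * k + 3 - 2 * j - (i + j) % 2

def vertexLabel (k : ℕ) : Fin 2 ⊕ Fin 2 × Fin k → ℕ
  | .inl i => centerLabel k i
  | .inr (i, j) => leafLabel k i j

def edgeLabel (k : ℕ) : Sym2 (Fin 2 ⊕ Fin 2 × Fin k) → ℕ :=
  Sym2.lift ⟨fun
    | .inl _, .inr (i, j) | .inr (i, j), .inl _ => pendantLabel k i j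
    -- among the edges of `firecracker 2 k`, only the link `v_{0,0} v_{1,0}` falls here
    | _, _ => 2 * k + 2, by rintro (_ | _) (_ | _) <;> rfl⟩

theorem sum_range_two_mul_add_one_add_mod_two {i : ℕ} (hi : i ≤ 1) (n : ℕ) :
    ∑ j ∈ Finset.range n, (2 * j + 1 + (i + j) % 2) = n ^ 2 + (n + i) / 2 := by
  induction n with
  | zero => simp; omega
  | succ n ih => rw [Finset.sum_range_succ, ih]; ring_nf; omega

theorem centerLabel_add_sum_pendantLabel {k i : ℕ} (hk : 0 < k) (hi : i ≤ 1) :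
    centerLabel k i + ∑ j ∈ Finset.range k, pendantLabel k i j = k ^ 2 + 4 * k + 3 + k / 2 := by
  obtain ⟨n, rfl⟩ := Nat.exists_eq_add_one_of_ne_zero hk.ne'
  have hsum := Finset.sum_range_succ' (fun j => 2 * j + 1 + (i + j) % 2) n
  rw [sum_range_two_mul_add_one_add_mod_two hi] at hsum
  rw [Finset.sum_range_succ']
  simp only [pendantLabel, Nat.add_one_ne_zero, if_false, if_true, centerLabel] at hsum ⊢
  split_ifs <;> ring_nf at hsum ⊢ <;> omega

theorem leafLabel_add_pendantLabel {k i j : ℕ} (hi : i ≤ 1) (hj : j < k) :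
    leafLabel k i j + (pendantLabel k i j + if j = 0 then 2 * k + 2 else 0) =
      if i = 1 ∧ j = 0 then 10 * k + 7 else 4 * k + 4 := by
  unfold leafLabel pendantLabel
  split_ifs <;> omega

section FirecrackerLabeling

variable {k : ℕ}

theorem edgeLabel_pendantEdge (q : Fin 2 × Fin k) :
    edgeLabel k (pendantEdge q) = pendantLabel k q.1 q.2 := rfl

variable [NeZero k]

theorem edgeLabel_linkEdge : edgeLabel k (linkEdge k) = 2 * k + 2 := rfl

theorem totalWeight_firecracker_two_inl (i : Fin 2) :
    totalWeight (firecracker 2 k) (vertexLabel k) (edgeLabel k) (Sum.inl i) =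
      k ^ 2 + 4 * k + 3 + k / 2 := by
  rw [totalWeight, weight_firecracker_two_inl]
  simp only [edgeLabel_pendantEdge, vertexLabel]
  rw [Fin.sum_univ_eq_sum_range (pendantLabel k i)]
  exact centerLabel_add_sum_pendantLabel (NeZero.pos k) (by omega)

theorem totalWeight_firecracker_two_inr (q : Fin 2 × Fin k) :
    totalWeight (firecracker 2 k) (vertexLabel k) (edgeLabel k) (Sum.inr q) =
      if q = (1, 0) then 10 * k + 7 else 4 * k + 4 := by
  obtain ⟨i, j⟩ := q
  rw [totalWeight, weight_firecracker_two_inr, edgeLabel_pendantEdge, edgeLabel_linkEdge]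
  have h := leafLabel_add_pendantLabel (k := k) (i := i) (j := j) (by omega) j.isLt
  simp only [vertexLabel, Prod.mk.injEq, Fin.ext_iff, Fin.val_zero, Fin.val_one]
  convert h using 3

theorem totalWeight_firecracker_two_ne_of_adj (hk : 2 ≤ k) {u v : Fin 2 ⊕ Fin 2 × Fin k}
    (huv : (firecracker 2 k).Adj u v) :
    totalWeight (firecracker 2 k) (vertexLabel k) (edgeLabel k) u ≠
      totalWeight (firecracker 2 k) (vertexLabel k) (edgeLabel k) v := by
  have hleaf : k ^ 2 + 4 * k + 3 + k / 2 ≠ 4 * k + 4 := by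
    have : 2 * k ≤ k ^ 2 := by nlinarith
    omega
  have hleaf₁₀ : k ^ 2 + 4 * k + 3 + k / 2 ≠ 10 * k + 7 := by
    rcases lt_or_ge k 7 with hk7 | hk7
    · interval_cases k <;> omega
    · have : 7 * k ≤ k ^ 2 := by nlinarith
      omega
  rw [← SimpleGraph.mem_edgeSet, edgeSet_firecracker_two] at huv
  rcases huv with h | ⟨q, h⟩ <;> rcases Sym2.eq_iff.1 h with ⟨rfl, rfl⟩ | ⟨rfl, rfl⟩
  all_goals
    simp only [totalWeight_firecracker_two_inl, totalWeight_firecracker_two_inr]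
    split_ifs <;> simp_all <;> omega

theorem mapsTo_firecracker_two :
    Set.MapsTo (Sum.elim (vertexLabel k) (edgeLabel k))
      (Set.range Sum.inl ∪ Sum.inr '' (firecracker 2 k).edgeSet) (Set.Icc 1 (4 * k + 3)) := by
  refine forall_mem_range_inl_union_image_inr_edgeSet_firecracker_two.2 ⟨?_, ?_, ?_, ?_⟩
  · intro i
    simp only [Sum.elim_inl, vertexLabel, centerLabel, Set.mem_Icc]
    split_ifs <;> omega
  · rintro ⟨i, j⟩
    simp only [Sum.elim_inl, vertexLabel, leafLabel, Set.mem_Icc]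
    split_ifs <;> omega
  · rintro ⟨i, j⟩
    simp only [Sum.elim_inr, edgeLabel_pendantEdge, pendantLabel, Set.mem_Icc]
    split_ifs <;> omega
  · simp only [Sum.elim_inr, edgeLabel_linkEdge, Set.mem_Icc]
    omega

theorem injOn_firecracker_two :
    Set.InjOn (Sum.elim (vertexLabel k) (edgeLabel k))
      (Set.range Sum.inl ∪ Sum.inr '' (firecracker 2 k).edgeSet) := by
  have hk := NeZero.pos k
  refine (forall_mem_range_inl_union_image_inr_edgeSet_firecracker_two (k := k)).2
    ⟨fun i => ?_, fun q => ?_, fun q => ?_, ?_⟩ <;>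
    refine (forall_mem_range_inl_union_image_inr_edgeSet_firecracker_two (k := k)).2
    ⟨fun i' => ?_, fun q' => ?_, fun q' => ?_, ?_⟩ <;>
    simp only [Sum.elim_inl, Sum.elim_inr, vertexLabel, edgeLabel_pendantEdge, edgeLabel_linkEdge,
      Sum.inl.injEq, Sum.inr.injEq, reduceCtorEq, pendantEdge_injective.eq_iff, Prod.ext_iff,
      Fin.ext_iff, implies_true] <;>
    intro h <;>
    simp only [centerLabel, leafLabel, pendantLabel] at h <;>
    split_ifs at h <;> omega

theorem isLocalAntimagicTotal_firecracker_two (hk : 2 ≤ k) :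
    IsLocalAntimagicTotal (firecracker 2 k) (vertexLabel k) (edgeLabel k) := by
  have hcard : Fintype.card (Fin 2 ⊕ Fin 2 × Fin k) + (firecracker 2 k).edgeFinset.card =
      4 * k + 3 := by
    simp only [card_edgeFinset_firecracker_two, Fintype.card_sum, Fintype.card_prod,
      Fintype.card_fin]
    ring
  exact isLocalAntimagicTotal_of_injOn (hcard ▸ mapsTo_firecracker_two) injOn_firecracker_two
    fun _ _ => totalWeight_firecracker_two_ne_of_adj hk

theorem totalColorCount_firecracker_two_le_three :
    totalColorCount (firecracker 2 k) (vertexLabel k) (edgeLabel k) ≤ 3 := by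
  refine (Finset.card_le_card ?_).trans
    (Finset.card_le_three (a := k ^ 2 + 4 * k + 3 + k / 2) (b := 10 * k + 7) (c := 4 * k + 4))
  intro c hc
  obtain ⟨i | q, -, rfl⟩ := Finset.mem_image.1 hc
  · simp [totalWeight_firecracker_two_inl]
  · rw [totalWeight_firecracker_two_inr]
    split_ifs <;> simp

end FirecrackerLabeling

/-- For every integer `k ≥ 3`, the local antimagic total chromatic number of
the firecracker graph `F_{2,k}` satisfies `2 ≤ χ_lat(F_{2,k}) ≤ 3`. -/
theorem chiLAT_firecracker_two {k : ℕ} (hk : 3 ≤ k) :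
    2 ≤ chiLAT (firecracker 2 k) ∧ chiLAT (firecracker 2 k) ≤ 3 := by
  have : NeZero k := ⟨by omega⟩
  have hlat := isLocalAntimagicTotal_firecracker_two (k := k) (by omega)
  exact ⟨two_le_chiLAT hlat (firecracker_two_adj_inl_inr (0, 0)),
    (chiLAT_le_totalColorCount hlat).trans totalColorCount_firecracker_two_le_three⟩

end LocalAntimagic
end
end
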